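/- (Baer–Krull, variant) Let (K, v) be a valued field with value group G and let s : G → K be a q-section. Let 𝒪 be the set of field orders of the residue field Kv and ℰ the set of group homomorphisms from G to {−1, 1}. The map sending (≤_0, ε) ∈ 𝒪 × ℰ to the family (≤_g)_{g∈G} defined by: a + K_g ≤_g b + K_g ⇔ φ_g⁻¹(a + K_g) ≤_0 φ_g⁻¹(b + K_g) if ε(g) = 1, and a + K_g ≤_g b + K_g ⇔ φ_g⁻¹(b + K_g) ≤_0 φ_g⁻¹(a + K_g) if ε(g) = −1, is a bijection from 𝒪 × ℰ onto the set of families (≤_g)_{g∈G} of group orders on the quotients K^g/K_g whose lifting to K is a field order. -/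

import Mathlib

/-- A total quasi-order: a reflexive, transitive, total binary relation. -/
def IsQO {A : Type*} (q : A → A → Prop) : Prop :=
  Reflexive q ∧ Transitive q ∧ ∀ a b, q a b ∨ q b a

/-- `a ∼ b`: the equivalence associated to a quasi-order. -/
def QOEquiv {A : Type*} (q : A → A → Prop) (a b : A) : Prop := q a b ∧ q b a

/-- A subset `B` is `≾`-convex. -/
def QOConvex {A : Type*} (q : A → A → Prop) (B : Set A) : Prop :=
  ∀ a b c, b ∈ B → c ∈ B → q b a → q a c → a ∈ B

section Group
variable {G : Type*} [AddCommGroup G]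

/-- An element `g` is v-type if `g ∼ -g`. -/
def VType (q : G → G → Prop) (g : G) : Prop := QOEquiv q g (-g)

/-- An element `g` is o-type if `g ≁ -g` or `g = 0`. -/
def OType (q : G → G → Prop) (g : G) : Prop := ¬ QOEquiv q g (-g) ∨ g = 0

/-- A compatible quasi-order on an abelian group: a total q.o. satisfying (Q1) and (Q2). -/
def IsCompatQO (q : G → G → Prop) : Prop :=
  IsQO q ∧ (∀ g, QOEquiv q g 0 → g = 0) ∧
    ∀ x y z : G, q x y → ¬ QOEquiv q y z → q (x + z) (y + z)

/-- Condition (*). -/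
def StarCond (q : G → G → Prop) : Prop :=
  (∀ g, QOEquiv q g 0 → g = 0) ∧
    ∀ f g h : G, q g h → ¬ QOEquiv q h (-f) → q (g + f) (h + f)

/-- A group order: a total, antisymmetric, translation invariant (reflexive transitive) order. -/
def IsGroupOrder (q : G → G → Prop) : Prop :=
  IsQO q ∧ (∀ a b, q a b → q b a → a = b) ∧ ∀ x y z : G, q x y → q (x + z) (y + z)

/-- The relation induced by `q` on the quotient `G ⧸ H`:
`g₁ + H ≾ g₂ + H ↔ ∃ h₁ h₂ ∈ H, g₁ + h₁ ≾ g₂ + h₂`, equivalently there are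
representatives `a` of `x` and `b` of `y` with `q a b`. -/
def IndRel (q : G → G → Prop) (H : AddSubgroup G) : G ⧸ H → G ⧸ H → Prop :=
  fun x y => ∃ a b : G, (a : G ⧸ H) = x ∧ (b : G ⧸ H) = y ∧ q a b

end Group

section Val
variable {G : Type*} [AddCommGroup G] {Γ : Type*} [LinearOrder Γ]

/-- A valuation on an abelian group `G` with values in `Γ ∪ {∞}`. -/
def IsGroupVal (v : G → WithTop Γ) : Prop :=
  (∀ g, v g = ⊤ ↔ g = 0) ∧ ∀ g h, min (v g) (v h) ≤ v (g - h)

theorem IsGroupVal.le_neg {v : G → WithTop Γ} (hv : IsGroupVal v) (a : G) :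
    v a ≤ v (-a) := by
  have h := hv.2 0 a
  rw [zero_sub] at h
  simpa [(hv.1 0).mpr rfl] using h

/-- The subgroup `G^γ = {g | v g ≥ γ}`. -/
def vGge (v : G → WithTop Γ) (hv : IsGroupVal v) (γ : Γ) : AddSubgroup G where
  carrier := {g | (γ : WithTop Γ) ≤ v g}
  zero_mem' := by simp [Set.mem_setOf_eq, (hv.1 0).mpr rfl]
  add_mem' := by
    intro a b ha hb
    have h := hv.2 a (-b)
    rw [sub_neg_eq_add] at h
    exact le_trans (le_min ha (le_trans hb (hv.le_neg b))) h
  neg_mem' := by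
    intro a ha
    exact le_trans ha (hv.le_neg a)

/-- The subgroup `G_γ = {g | v g > γ}`. -/
def vGlt (v : G → WithTop Γ) (hv : IsGroupVal v) (γ : Γ) : AddSubgroup G where
  carrier := {g | (γ : WithTop Γ) < v g}
  zero_mem' := by simp [Set.mem_setOf_eq, (hv.1 0).mpr rfl]
  add_mem' := by
    intro a b ha hb
    have h := hv.2 a (-b)
    rw [sub_neg_eq_add] at h
    exact lt_of_lt_of_le (lt_min ha (lt_of_lt_of_le hb (hv.le_neg b))) h
  neg_mem' := by
    intro a ha
    exact lt_of_lt_of_le ha (hv.le_neg a)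

/-- `v` is compatible with the q.o. `q`: `0 ≾ g ≾ h → v g ≥ v h`. -/
def ValCompat (v : G → WithTop Γ) (q : G → G → Prop) : Prop :=
  ∀ g h : G, q 0 g → q g h → v h ≤ v g

/-- The quotient `G^γ / G_γ`. -/
abbrev vQuot (v : G → WithTop Γ) (hv : IsGroupVal v) (γ : Γ) :=
  (vGge v hv γ) ⧸ ((vGlt v hv γ).addSubgroupOf (vGge v hv γ))

/-- The class `g + G_γ` of an element `g ∈ G^γ` in `G^γ / G_γ`. -/
def vMk (v : G → WithTop Γ) (hv : IsGroupVal v) (γ : Γ) (g : G) (hg : g ∈ vGge v hv γ) :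
    vQuot v hv γ :=
  QuotientAddGroup.mk ⟨g, hg⟩

/-- The q.o. induced by `q` on the quotient `G^γ / G_γ`. -/
def vInd (v : G → WithTop Γ) (hv : IsGroupVal v) (q : G → G → Prop) (γ : Γ) :
    vQuot v hv γ → vQuot v hv γ → Prop :=
  fun x y => ∃ (a b : G) (ha : a ∈ vGge v hv γ) (hb : b ∈ vGge v hv γ),
    vMk v hv γ a ha = x ∧ vMk v hv γ b hb = y ∧ q a b

end Val

/-- A valuation on `G`, bundled with its value set. -/
structure ValuationOn (G : Type u) [AddCommGroup G] : Type (u + 1) where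
  Γ : Type u
  [lo : LinearOrder Γ]
  v : G → WithTop Γ
  top_iff : ∀ g, v g = ⊤ ↔ g = 0
  sub_min : ∀ g h, min (v g) (v h) ≤ v (g - h)

attribute [instance] ValuationOn.lo

/-- A q.o. is valuational if it is induced by some valuation. -/
def IsValuational {G : Type u} [AddCommGroup G] (q : G → G → Prop) : Prop :=
  ∃ V : ValuationOn G, ∀ g h, q g h ↔ V.v h ≤ V.v g

section CRel
variable {G : Type*} [AddCommGroup G]

/-- A compatible C-relation on an abelian group. -/
def IsCRel (C : G → G → G → Prop) : Prop :=
  (∀ x y z, C x y z → C x z y) ∧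
  (∀ x y z, C x y z → ¬ C y x z) ∧
  (∀ w x y z, C x y z → C w y z ∨ C x w z) ∧
  (∀ x y, x ≠ y → C x y y) ∧
  (∀ f g h x, C f g h → C (x + f) (x + g) (x + h))

/-- A C-quasi-order: the q.o. associated to a compatible C-relation. -/
def IsCqo (q : G → G → Prop) : Prop :=
  ∃ C : G → G → G → Prop, IsCRel C ∧ ∀ g h, q g h ↔ ¬ C g h 0

end CRel

section FieldVal
variable {K : Type u} [Field K] {G : Type v} [AddCommGroup G] [LinearOrder G] [IsOrderedAddMonoid G]

/-- A (surjective) field valuation `v : K → G ∪ {∞}`. -/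
def IsFieldVal (v : K → WithTop G) : Prop :=
  Function.Surjective v ∧ (∀ x, v x = ⊤ ↔ x = 0) ∧
    (∀ x y, v (x * y) = v x + v y) ∧ ∀ x y, min (v x) (v y) ≤ v (x - y)

/-- A field valuation is in particular a valuation of the additive group `(K, +)`. -/
theorem IsFieldVal.toGroupVal {v : K → WithTop G} (hv : IsFieldVal v) :
    IsGroupVal v :=
  ⟨hv.2.1, hv.2.2.2⟩

/-- A q-section of the valued field `(K, v)`. -/
def IsQSection (v : K → WithTop G) (s : G → K) : Prop :=
  s 0 = 1 ∧ (∀ g, v (s g) = (g : WithTop G)) ∧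
    ∀ g h : G, ∃ d : K, d ≠ 0 ∧ s (g + h) * (s g * s h)⁻¹ = d ^ 2

/-- A field order on `K`: a group order of `(K, +)` whose positive cone is closed
under multiplication. -/
def IsFieldOrder (le : K → K → Prop) : Prop :=
  IsGroupOrder le ∧ ∀ a b : K, le 0 a → le 0 b → le 0 (a * b)

/-- `le0` is a field order of the residue field `Kv = K^0/K_0`: it is a group order
of the additive quotient whose positive cone is closed under (the induced)
multiplication, expressed via representatives. -/
def IsResFieldOrder (v : K → WithTop G) (hv : IsGroupVal v)
    (le0 : vQuot v hv (0 : G) → vQuot v hv (0 : G) → Prop) : Prop :=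
  IsGroupOrder le0 ∧
    ∀ (a b : K) (ha : a ∈ vGge v hv 0) (hb : b ∈ vGge v hv 0)
      (hab : a * b ∈ vGge v hv 0),
      le0 0 (vMk v hv 0 a ha) → le0 0 (vMk v hv 0 b hb) →
        le0 0 (vMk v hv 0 (a * b) hab)

/-- The map `φ_g : Kv → K^g/K_g`, `a + K_0 ↦ s(g)a + K_g`, is order-preserving
(from `le0` to `leg`). -/
def PhiMono (v : K → WithTop G) (hv : IsGroupVal v) (s : G → K) (g : G)
    (le0 : vQuot v hv (0 : G) → vQuot v hv (0 : G) → Prop)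
    (leg : vQuot v hv g → vQuot v hv g → Prop) : Prop :=
  ∀ (a b : K) (ha : a ∈ vGge v hv 0) (hb : b ∈ vGge v hv 0)
    (ha' : s g * a ∈ vGge v hv g) (hb' : s g * b ∈ vGge v hv g),
    le0 (vMk v hv 0 a ha) (vMk v hv 0 b hb) →
      leg (vMk v hv g (s g * a) ha') (vMk v hv g (s g * b) hb')

/-- The map `φ_g : Kv → K^g/K_g`, `a + K_0 ↦ s(g)a + K_g`, is order-reversing
(from `le0` to `leg`). -/
def PhiAnti (v : K → WithTop G) (hv : IsGroupVal v) (s : G → K) (g : G)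
    (le0 : vQuot v hv (0 : G) → vQuot v hv (0 : G) → Prop)
    (leg : vQuot v hv g → vQuot v hv g → Prop) : Prop :=
  ∀ (a b : K) (ha : a ∈ vGge v hv 0) (hb : b ∈ vGge v hv 0)
    (ha' : s g * a ∈ vGge v hv g) (hb' : s g * b ∈ vGge v hv g),
    le0 (vMk v hv 0 a ha) (vMk v hv 0 b hb) →
      leg (vMk v hv g (s g * b) hb') (vMk v hv g (s g * a) ha')

/-- The lifting of a family of group orders on the quotients `K^g/K_g` to `K`:
`a ≤ b` iff `a = b`, or `0 ≤_g (b - a) + K_g` where `g = v (b - a)`. -/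
def LiftOrdFam (v : K → WithTop G) (hv : IsGroupVal v)
    (fam : ∀ g : G, vQuot v hv g → vQuot v hv g → Prop) : K → K → Prop :=
  fun a b => a = b ∨
    ∃ (g : G) (_ : (g : WithTop G) = v (b - a)) (hm : b - a ∈ vGge v hv g),
      fam g 0 (vMk v hv g (b - a) hm)

end FieldVal

/-- The family of orders `(≤_g)` associated to a residue field order `le0` and a
character `ε : G → {±1}`: `a + K_g ≤_g b + K_g ⇔ φ_g⁻¹(a + K_g) ≤_0 φ_g⁻¹(b + K_g)`
if `ε g = 1`, and with the inequality reversed if `ε g = -1`. -/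
def FamOfPair {K : Type u} [Field K] {G : Type v} [AddCommGroup G] [LinearOrder G] [IsOrderedAddMonoid G]
    (v : K → WithTop G) (hv : IsGroupVal v) (s : G → K)
    (le0 : vQuot v hv (0 : G) → vQuot v hv (0 : G) → Prop) (ε : G → ℤˣ) :
    ∀ g : G, vQuot v hv g → vQuot v hv g → Prop :=
  fun g x y =>
    ∃ (a b : K) (ha : a ∈ vGge v hv 0) (hb : b ∈ vGge v hv 0)
      (ha' : s g * a ∈ vGge v hv g) (hb' : s g * b ∈ vGge v hv g),
      vMk v hv g (s g * a) ha' = x ∧ vMk v hv g (s g * b) hb' = y ∧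
        (if ε g = 1 then le0 (vMk v hv 0 a ha) (vMk v hv 0 b hb)
          else le0 (vMk v hv 0 b hb) (vMk v hv 0 a ha))

section BKHelpers
universe u v
variable {K : Type u} [Field K] {G : Type v} [AddCommGroup G] [LinearOrder G] [IsOrderedAddMonoid G]
variable {v : K → WithTop G}

theorem mem_vGge {hg : IsGroupVal v} {γ : G} {x : K} :
    x ∈ vGge v hg γ ↔ (γ : WithTop G) ≤ v x := Iff.rfl

theorem mem_vGlt {hg : IsGroupVal v} {γ : G} {x : K} :
    x ∈ vGlt v hg γ ↔ (γ : WithTop G) < v x := Iff.rfl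

theorem bk_v_one (hv : IsFieldVal v) : v 1 = (0 : WithTop G) := by
  have h := hv.2.2.1 1 1
  rw [mul_one] at h
  cases h1 : v (1 : K) with
  | top => exact absurd ((hv.2.1 1).mp h1) one_ne_zero
  | coe g =>
    rw [h1, ← WithTop.coe_add, WithTop.coe_eq_coe] at h
    have : g = 0 := by
      have := congrArg (· - g) h
      simpa using this.symm
    rw [this]; rfl

theorem bk_v_ne_top (hv : IsFieldVal v) {x : K} (hx : x ≠ 0) : v x ≠ ⊤ := fun h =>
  hx ((hv.2.1 x).mp h)

theorem bk_v_inv (hv : IsFieldVal v) {x : K} (hx : x ≠ 0) : v x + v x⁻¹ = 0 := by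
  have h := hv.2.2.1 x x⁻¹
  rw [mul_inv_cancel₀ hx, bk_v_one hv] at h
  exact h.symm

theorem bk_s_ne_zero (hv : IsFieldVal v) {s : G → K} (hs : IsQSection v s) (γ : G) :
    s γ ≠ 0 := fun h => by
  have := hs.2.1 γ
  rw [h, (hv.2.1 0).mpr rfl] at this
  exact WithTop.coe_ne_top this.symm

theorem bk_lt_coe_add (γ : G) (t : WithTop G) :
    (γ : WithTop G) < (γ : WithTop G) + t ↔ 0 < t := by
  cases t with
  | top => simp [WithTop.coe_lt_top]
  | coe c =>
    rw [← WithTop.coe_add, WithTop.coe_lt_coe, ← WithTop.coe_zero, WithTop.coe_lt_coe]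
    exact lt_add_iff_pos_right γ

theorem bk_le_coe_add (γ : G) (t : WithTop G) :
    (γ : WithTop G) ≤ (γ : WithTop G) + t ↔ 0 ≤ t := by
  cases t with
  | top => simp
  | coe c =>
    rw [← WithTop.coe_add, WithTop.coe_le_coe, ← WithTop.coe_zero, WithTop.coe_le_coe]
    exact le_add_iff_nonneg_right γ

theorem bk_v_smul (hv : IsFieldVal v) {s : G → K} (hs : IsQSection v s) (γ : G) (c : K) :
    v (s γ * c) = (γ : WithTop G) + v c := by
  rw [hv.2.2.1, hs.2.1]

end BKHelpers
section BKHelpers2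
universe u v
variable {K : Type u} [Field K] {G : Type v} [AddCommGroup G] [LinearOrder G] [IsOrderedAddMonoid G]
variable {v : K → WithTop G}

theorem vMk_congr {hg : IsGroupVal v} {γ : G} {a b : K} (ha : a ∈ vGge v hg γ)
    (hb : b ∈ vGge v hg γ) (h : a = b) : vMk v hg γ a ha = vMk v hg γ b hb := by
  subst h; rfl

theorem vMk_zero {hg : IsGroupVal v} {γ : G} (h : (0:K) ∈ vGge v hg γ) :
    vMk v hg γ 0 h = 0 := rfl

theorem vMk_add {hg : IsGroupVal v} {γ : G} {a b : K} (ha : a ∈ vGge v hg γ)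
    (hb : b ∈ vGge v hg γ) :
    vMk v hg γ a ha + vMk v hg γ b hb = vMk v hg γ (a + b) (add_mem ha hb) := rfl

theorem vMk_neg {hg : IsGroupVal v} {γ : G} {a : K} (ha : a ∈ vGge v hg γ) :
    -vMk v hg γ a ha = vMk v hg γ (-a) (neg_mem ha) := rfl

theorem vMk_eq_iff {hg : IsGroupVal v} {γ : G} {a b : K} (ha : a ∈ vGge v hg γ)
    (hb : b ∈ vGge v hg γ) :
    vMk v hg γ a ha = vMk v hg γ b hb ↔ (γ : WithTop G) < v (b - a) := by
  unfold vMk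
  rw [QuotientAddGroup.eq]
  rw [AddSubgroup.mem_addSubgroupOf]
  show (-a + b) ∈ vGlt v hg γ ↔ _
  rw [mem_vGlt, neg_add_eq_sub]

theorem vMk_eq_zero_iff {hg : IsGroupVal v} {γ : G} {a : K} (ha : a ∈ vGge v hg γ) :
    vMk v hg γ a ha = 0 ↔ (γ : WithTop G) < v a := by
  rw [← vMk_zero (zero_mem _), eq_comm, vMk_eq_iff, sub_zero]

theorem vMk_surj {hg : IsGroupVal v} {γ : G} (x : vQuot v hg γ) :
    ∃ (a : K) (ha : a ∈ vGge v hg γ), vMk v hg γ a ha = x := by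
  induction x using QuotientAddGroup.induction_on with
  | H a => exact ⟨a.1, a.2, rfl⟩

/-- every class in `K^γ/K_γ` is `s γ * a + K_γ` for some `a ∈ K^0`. -/
theorem vMk_rep (hv : IsFieldVal v) {s : G → K} (hs : IsQSection v s) {γ : G}
    (x : vQuot v hv.toGroupVal γ) :
    ∃ (a : K) (ha : a ∈ vGge v hv.toGroupVal 0)
      (ha' : s γ * a ∈ vGge v hv.toGroupVal γ), vMk v hv.toGroupVal γ (s γ * a) ha' = x := by
  obtain ⟨u, hu, rfl⟩ := vMk_surj x
  have hsne : s γ ≠ 0 := bk_s_ne_zero hv hs γ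
  refine ⟨(s γ)⁻¹ * u, ?_, ?_, ?_⟩
  · rw [mem_vGge, hv.2.2.1]
    have h1 : v (s γ)⁻¹ = ((-γ : G) : WithTop G) := by
      have := bk_v_inv hv hsne
      rw [hs.2.1] at this
      cases hvi : v (s γ)⁻¹ with
      | top => rw [hvi] at this; simp at this
      | coe c =>
        rw [hvi, ← WithTop.coe_add, ← WithTop.coe_zero, WithTop.coe_eq_coe] at this
        rw [WithTop.coe_eq_coe]
        exact (neg_eq_of_add_eq_zero_right this).symm
    rw [h1]
    calc (0 : WithTop G) = ((-γ : G) : WithTop G) + (γ : WithTop G) := by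
          rw [← WithTop.coe_add]; norm_num
      _ ≤ ((-γ : G) : WithTop G) + v u := add_le_add_right hu _
  · rw [mem_vGge]
    have : s γ * ((s γ)⁻¹ * u) = u := by field_simp
    rw [this]; exact hu
  · exact vMk_congr _ _ (by field_simp)

/-- `φ_γ` reflects/preserves equality of classes. -/
theorem vMk_smul_eq_iff (hv : IsFieldVal v) {s : G → K} (hs : IsQSection v s) {γ : G}
    {a b : K} (ha : a ∈ vGge v hv.toGroupVal 0) (hb : b ∈ vGge v hv.toGroupVal 0)
    (ha' : s γ * a ∈ vGge v hv.toGroupVal γ) (hb' : s γ * b ∈ vGge v hv.toGroupVal γ) :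
    vMk v hv.toGroupVal γ (s γ * a) ha' = vMk v hv.toGroupVal γ (s γ * b) hb' ↔
      vMk v hv.toGroupVal 0 a ha = vMk v hv.toGroupVal 0 b hb := by
  rw [vMk_eq_iff, vMk_eq_iff, ← mul_sub, bk_v_smul hv hs, bk_lt_coe_add]
  norm_num

end BKHelpers2
section BKHelpers3
universe u v
variable {K : Type u} [Field K] {G : Type v} [AddCommGroup G] [LinearOrder G] [IsOrderedAddMonoid G]
variable {v : K → WithTop G}

section GO
variable {A : Type*} [AddCommGroup A] {q : A → A → Prop}

theorem GO.refl (h : IsGroupOrder q) (a : A) : q a a := h.1.1 a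
theorem GO.trans (h : IsGroupOrder q) {a b c : A} : q a b → q b c → q a c :=
  fun h1 h2 => h.1.2.1 h1 h2
theorem GO.total (h : IsGroupOrder q) (a b : A) : q a b ∨ q b a := h.1.2.2 a b
theorem GO.antisymm (h : IsGroupOrder q) {a b : A} : q a b → q b a → a = b := h.2.1 a b
theorem GO.add (h : IsGroupOrder q) {a b : A} (c : A) : q a b → q (a + c) (b + c) :=
  h.2.2 a b c

theorem GO.sub_iff (h : IsGroupOrder q) (a b : A) : q a b ↔ q 0 (b - a) := by
  constructor
  · intro hab
    have := GO.add h (-a) hab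
    simpa [sub_eq_add_neg] using this
  · intro hab
    have := GO.add h a hab
    simpa using this

theorem GO.neg_iff (h : IsGroupOrder q) (a : A) : q a 0 ↔ q 0 (-a) := by
  rw [GO.sub_iff h a 0, zero_sub]

end GO

section FO
variable {L : K → K → Prop}

theorem FO.neg_iff (h : IsFieldOrder L) (a : K) : L a 0 ↔ L 0 (-a) := GO.neg_iff h.1 a

theorem FO.pos_total (h : IsFieldOrder L) (a : K) : L 0 a ∨ L 0 (-a) := by
  rcases GO.total h.1 0 a with h1 | h1
  · exact Or.inl h1
  · exact Or.inr ((FO.neg_iff h a).mp h1)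

theorem FO.not_both (h : IsFieldOrder L) {a : K} (ha : a ≠ 0) (h1 : L 0 a) (h2 : L 0 (-a)) :
    False := ha (GO.antisymm h.1 h1 ((FO.neg_iff h a).mpr h2)).symm

theorem FO.sq_pos (h : IsFieldOrder L) (d : K) : L 0 (d * d) := by
  rcases FO.pos_total h d with h1 | h1
  · exact h.2 _ _ h1 h1
  · have := h.2 _ _ h1 h1
    rwa [neg_mul_neg] at this

theorem FO.mul_sign (h : IsFieldOrder L) {a b : K} (ha : a ≠ 0) (hb : b ≠ 0) :
    L 0 (a * b) ↔ (L 0 a ↔ L 0 b) := by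
  have hab : a * b ≠ 0 := mul_ne_zero ha hb
  rcases FO.pos_total h a with h1 | h1 <;> rcases FO.pos_total h b with h2 | h2
  · simp only [iff_true_intro h1, iff_true_intro h2, iff_self]
    exact iff_of_true (h.2 _ _ h1 h2) (by tauto)
  · have hn : L 0 (-(a*b)) := by have := h.2 _ _ h1 h2; rwa [mul_neg] at this
    constructor
    · intro hp; exact (FO.not_both h hab hp hn).elim
    · intro hiff; exact (FO.not_both h hb (hiff.mp h1) h2).elim
  · have hn : L 0 (-(a*b)) := by have := h.2 _ _ h1 h2; rwa [neg_mul] at this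
    constructor
    · intro hp; exact (FO.not_both h hab hp hn).elim
    · intro hiff; exact (FO.not_both h ha (hiff.mpr h2) h1).elim
  · have hp : L 0 (a * b) := by have := h.2 _ _ h1 h2; rwa [neg_mul_neg] at this
    refine iff_of_true hp ?_
    constructor
    · intro ha0; exact (FO.not_both h ha ha0 h1).elim
    · intro hb0; exact (FO.not_both h hb hb0 h2).elim
end FO

/-- Bridge: positivity in the lifted order vs positivity of the class. -/
theorem bk_bridge {hg : IsGroupVal v}
    (fam : ∀ g : G, vQuot v hg g → vQuot v hg g → Prop)
    {g : G} {x : K} (hx : (g : WithTop G) = v x) (hm : x ∈ vGge v hg g) :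
    LiftOrdFam v hg fam 0 x ↔ fam g 0 (vMk v hg g x hm) := by
  unfold LiftOrdFam
  simp only [sub_zero]
  constructor
  · rintro (h | ⟨g', hg', hm', hf⟩)
    · exfalso
      rw [← h] at hx
      have : v (0 : K) = ⊤ := (hg.1 0).mpr rfl
      rw [this] at hx
      exact WithTop.coe_ne_top hx
    · have : g' = g := WithTop.coe_injective (hg'.trans hx.symm)
      subst this
      exact hf
  · intro h
    exact Or.inr ⟨g, hx, hm, h⟩

end BKHelpers3
section BKHelpers4
universe u v
variable {K : Type u} [Field K] {G : Type v} [AddCommGroup G] [LinearOrder G] [IsOrderedAddMonoid G]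
variable {v : K → WithTop G}

theorem mem0_one (hv : IsFieldVal v) : (1 : K) ∈ vGge v hv.toGroupVal (0 : G) := by
  rw [mem_vGge, bk_v_one hv, WithTop.coe_zero]

theorem mem0_mul (hv : IsFieldVal v) {a b : K} (ha : a ∈ vGge v hv.toGroupVal (0 : G))
    (hb : b ∈ vGge v hv.toGroupVal (0 : G)) : a * b ∈ vGge v hv.toGroupVal (0 : G) := by
  rw [mem_vGge, hv.2.2.1]
  calc ((0:G) : WithTop G) = 0 + 0 := by simp
    _ ≤ v a + v b := add_le_add ha hb

theorem res_one_ne (hv : IsFieldVal v) :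
    vMk v hv.toGroupVal (0:G) 1 (mem0_one hv) ≠ 0 := by
  rw [Ne, vMk_eq_zero_iff, bk_v_one hv]
  simp

theorem res_sq_pos (hv : IsFieldVal v)
    {le0 : vQuot v hv.toGroupVal (0:G) → vQuot v hv.toGroupVal (0:G) → Prop}
    (hR : IsResFieldOrder v hv.toGroupVal le0) {e : K}
    (he : e ∈ vGge v hv.toGroupVal (0:G)) :
    le0 0 (vMk v hv.toGroupVal 0 (e * e) (mem0_mul hv he he)) := by
  rcases GO.total hR.1 0 (vMk v hv.toGroupVal 0 e he) with h1 | h1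
  · exact hR.2 e e he he _ h1 h1
  · have h2 : le0 0 (vMk v hv.toGroupVal 0 (-e) (neg_mem he)) := by
      rw [← vMk_neg he]
      exact (GO.neg_iff hR.1 _).mp h1
    have := hR.2 (-e) (-e) (neg_mem he) (neg_mem he) (mem0_mul hv (neg_mem he) (neg_mem he))
      h2 h2
    rwa [vMk_congr _ (mem0_mul hv he he) (neg_mul_neg e e)] at this

theorem res_one_pos (hv : IsFieldVal v)
    {le0 : vQuot v hv.toGroupVal (0:G) → vQuot v hv.toGroupVal (0:G) → Prop}
    (hR : IsResFieldOrder v hv.toGroupVal le0) :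
    le0 0 (vMk v hv.toGroupVal (0:G) 1 (mem0_one hv)) := by
  have := res_sq_pos hv hR (mem0_one hv)
  rwa [vMk_congr _ (mem0_one hv) (one_mul 1)] at this

theorem res_one_not_neg (hv : IsFieldVal v)
    {le0 : vQuot v hv.toGroupVal (0:G) → vQuot v hv.toGroupVal (0:G) → Prop}
    (hR : IsResFieldOrder v hv.toGroupVal le0) :
    ¬ le0 (vMk v hv.toGroupVal (0:G) 1 (mem0_one hv)) 0 := fun h =>
  res_one_ne hv (GO.antisymm hR.1 h (res_one_pos hv hR))

theorem res_neg_char (hv : IsFieldVal v)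
    {le0 : vQuot v hv.toGroupVal (0:G) → vQuot v hv.toGroupVal (0:G) → Prop}
    (hR : IsResFieldOrder v hv.toGroupVal le0) {x : vQuot v hv.toGroupVal (0:G)}
    (hx : x ≠ 0) : le0 x 0 ↔ ¬ le0 0 x := by
  constructor
  · intro h1 h2
    exact hx (GO.antisymm hR.1 h1 h2)
  · intro h1
    rcases GO.total hR.1 x 0 with h | h
    · exact h
    · exact absurd h h1

theorem famOfPair_iff (hv : IsFieldVal v) {s : G → K} (hs : IsQSection v s)
    (le0 : vQuot v hv.toGroupVal (0:G) → vQuot v hv.toGroupVal (0:G) → Prop) (ε : G → ℤˣ)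
    {g : G} {a b : K} (ha : a ∈ vGge v hv.toGroupVal 0) (hb : b ∈ vGge v hv.toGroupVal 0)
    (ha' : s g * a ∈ vGge v hv.toGroupVal g) (hb' : s g * b ∈ vGge v hv.toGroupVal g) :
    FamOfPair v hv.toGroupVal s le0 ε g (vMk v hv.toGroupVal g (s g * a) ha')
        (vMk v hv.toGroupVal g (s g * b) hb') ↔
      (if ε g = 1 then le0 (vMk v hv.toGroupVal 0 a ha) (vMk v hv.toGroupVal 0 b hb)
        else le0 (vMk v hv.toGroupVal 0 b hb) (vMk v hv.toGroupVal 0 a ha)) := by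
  constructor
  · rintro ⟨a', b', ha0, hb0, ha1, hb1, hxa, hxb, hcond⟩
    have e1 : vMk v hv.toGroupVal 0 a' ha0 = vMk v hv.toGroupVal 0 a ha :=
      (vMk_smul_eq_iff hv hs ha0 ha ha1 ha').mp hxa
    have e2 : vMk v hv.toGroupVal 0 b' hb0 = vMk v hv.toGroupVal 0 b hb :=
      (vMk_smul_eq_iff hv hs hb0 hb hb1 hb').mp hxb
    rwa [e1, e2] at hcond
  · intro h
    exact ⟨a, b, ha, hb, ha', hb', rfl, rfl, h⟩

end BKHelpers4
section BKHelpers5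
universe u v
variable {K : Type u} [Field K] {G : Type v} [AddCommGroup G] [LinearOrder G] [IsOrderedAddMonoid G]
variable {v : K → WithTop G}

theorem famOfPair_groupOrder (hv : IsFieldVal v) {s : G → K} (hs : IsQSection v s)
    {le0 : vQuot v hv.toGroupVal (0:G) → vQuot v hv.toGroupVal (0:G) → Prop}
    (hR : IsResFieldOrder v hv.toGroupVal le0) (ε : G → ℤˣ) (g : G) :
    IsGroupOrder (FamOfPair v hv.toGroupVal s le0 ε g) := by
  refine ⟨⟨?_, ?_, ?_⟩, ?_, ?_⟩
  · intro x
    obtain ⟨a, ha, ha', rfl⟩ := vMk_rep hv hs x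
    rw [famOfPair_iff hv hs le0 ε ha ha ha' ha']
    split <;> exact GO.refl hR.1 _
  · intro x y z hxy hyz
    obtain ⟨a, ha, ha', rfl⟩ := vMk_rep hv hs x
    obtain ⟨b, hb, hb', rfl⟩ := vMk_rep hv hs y
    obtain ⟨c, hc, hc', rfl⟩ := vMk_rep hv hs z
    rw [famOfPair_iff hv hs le0 ε ha hb ha' hb'] at hxy
    rw [famOfPair_iff hv hs le0 ε hb hc hb' hc'] at hyz
    rw [famOfPair_iff hv hs le0 ε ha hc ha' hc']
    by_cases hε : ε g = 1
    · simp only [if_pos hε] at hxy hyz ⊢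
      exact GO.trans hR.1 hxy hyz
    · simp only [if_neg hε] at hxy hyz ⊢
      exact GO.trans hR.1 hyz hxy
  · intro x y
    obtain ⟨a, ha, ha', rfl⟩ := vMk_rep hv hs x
    obtain ⟨b, hb, hb', rfl⟩ := vMk_rep hv hs y
    rw [famOfPair_iff hv hs le0 ε ha hb ha' hb',
      famOfPair_iff hv hs le0 ε hb ha hb' ha']
    rcases GO.total hR.1 (vMk v hv.toGroupVal 0 a ha) (vMk v hv.toGroupVal 0 b hb) with h | h
    · by_cases hε : ε g = 1
      · simp only [if_pos hε]; exact Or.inl h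
      · simp only [if_neg hε]; exact Or.inr h
    · by_cases hε : ε g = 1
      · simp only [if_pos hε]; exact Or.inr h
      · simp only [if_neg hε]; exact Or.inl h
  · intro x y hxy hyx
    obtain ⟨a, ha, ha', rfl⟩ := vMk_rep hv hs x
    obtain ⟨b, hb, hb', rfl⟩ := vMk_rep hv hs y
    rw [famOfPair_iff hv hs le0 ε ha hb ha' hb'] at hxy
    rw [famOfPair_iff hv hs le0 ε hb ha hb' ha'] at hyx
    rw [vMk_smul_eq_iff hv hs ha hb ha' hb']
    by_cases hε : ε g = 1
    · simp only [if_pos hε] at hxy hyx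
      exact GO.antisymm hR.1 hxy hyx
    · simp only [if_neg hε] at hxy hyx
      exact GO.antisymm hR.1 hyx hxy
  · intro x y z hxy
    obtain ⟨a, ha, ha', rfl⟩ := vMk_rep hv hs x
    obtain ⟨b, hb, hb', rfl⟩ := vMk_rep hv hs y
    obtain ⟨c, hc, hc', rfl⟩ := vMk_rep hv hs z
    rw [famOfPair_iff hv hs le0 ε ha hb ha' hb'] at hxy
    have hac' : s g * (a + c) ∈ vGge v hv.toGroupVal g := by
      rw [mul_add]; exact add_mem ha' hc'
    have hbc' : s g * (b + c) ∈ vGge v hv.toGroupVal g := by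
      rw [mul_add]; exact add_mem hb' hc'
    have e1 : vMk v hv.toGroupVal g (s g * a) ha' + vMk v hv.toGroupVal g (s g * c) hc' =
        vMk v hv.toGroupVal g (s g * (a + c)) hac' := by
      rw [vMk_add]; exact vMk_congr _ _ (mul_add _ _ _).symm
    have e2 : vMk v hv.toGroupVal g (s g * b) hb' + vMk v hv.toGroupVal g (s g * c) hc' =
        vMk v hv.toGroupVal g (s g * (b + c)) hbc' := by
      rw [vMk_add]; exact vMk_congr _ _ (mul_add _ _ _).symm
    rw [e1, e2, famOfPair_iff hv hs le0 ε (add_mem ha hc) (add_mem hb hc) hac' hbc']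
    by_cases hε : ε g = 1
    · simp only [if_pos hε] at hxy ⊢
      rw [← vMk_add ha hc, ← vMk_add hb hc]
      exact GO.add hR.1 _ hxy
    · simp only [if_neg hε] at hxy ⊢
      rw [← vMk_add ha hc, ← vMk_add hb hc]
      exact GO.add hR.1 _ hxy

end BKHelpers5
section BKHelpers6
universe u v
variable {K : Type u} [Field K] {G : Type v} [AddCommGroup G] [LinearOrder G] [IsOrderedAddMonoid G]
variable {v : K → WithTop G}

theorem bk_v_neg (hg : IsGroupVal v) (x : K) : v (-x) = v x := by
  refine le_antisymm ?_ (hg.le_neg x)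
  have := hg.le_neg (-x)
  rwa [neg_neg] at this

theorem bk_v_add (hg : IsGroupVal v) (x y : K) : min (v x) (v y) ≤ v (x + y) := by
  have := hg.2 x (-y)
  rw [sub_neg_eq_add, bk_v_neg hg y] at this
  exact this

theorem bk_v_add_eq (hg : IsGroupVal v) {x y : K} (h : v x < v y) : v (x + y) = v x := by
  refine le_antisymm ?_ (le_trans (le_min le_rfl h.le) (bk_v_add hg x y))
  by_contra hc
  push_neg at hc
  have h2 : v x < min (v (x + y)) (v y) := lt_min hc h
  have h3 := lt_of_lt_of_le h2 (hg.2 (x + y) y)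
  rw [add_sub_cancel_right] at h3
  exact lt_irrefl _ h3
  
theorem bk_v_inv_coe (hv : IsFieldVal v) {x : K} {m : G} (hx : v x = (m : WithTop G)) :
    v x⁻¹ = ((-m : G) : WithTop G) := by
  have hxne : x ≠ 0 := fun h => by
    rw [h, (hv.2.1 0).mpr rfl] at hx; exact (WithTop.coe_ne_top hx.symm).elim
  have h := bk_v_inv hv hxne
  rw [hx] at h
  cases hvi : v x⁻¹ with
  | top => rw [hvi] at h; simp at h
  | coe c =>
    rw [hvi, ← WithTop.coe_add, ← WithTop.coe_zero, WithTop.coe_eq_coe] at h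
    rw [WithTop.coe_eq_coe]
    exact (neg_eq_of_add_eq_zero_right h).symm

/-- `L a b ↔ L 0 (b - a)` for the lifted relation. -/
theorem lift_shift {hg : IsGroupVal v}
    (fam : ∀ g : G, vQuot v hg g → vQuot v hg g → Prop) (a b : K) :
    LiftOrdFam v hg fam a b ↔ LiftOrdFam v hg fam 0 (b - a) := by
  unfold LiftOrdFam
  rw [sub_zero]
  constructor <;> rintro (h | h)
  · exact Or.inl (by rw [h, sub_self])
  · exact Or.inr h
  · exact Or.inl (sub_eq_zero.mp h.symm).symm
  · exact Or.inr h

theorem lift_pos_add {hg : IsGroupVal v}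
    {fam : ∀ g : G, vQuot v hg g → vQuot v hg g → Prop}
    (hGO : ∀ g, IsGroupOrder (fam g)) {x y : K}
    (hx : LiftOrdFam v hg fam 0 x) (hy : LiftOrdFam v hg fam 0 y) :
    LiftOrdFam v hg fam 0 (x + y) := by
  by_cases hx0 : x = 0
  · rw [hx0, zero_add]; exact hy
  by_cases hy0 : y = 0
  · rw [hy0, add_zero]; exact hx
  have hvx : v x ≠ ⊤ := fun h => hx0 ((hg.1 x).mp h)
  have hvy : v y ≠ ⊤ := fun h => hy0 ((hg.1 y).mp h)
  obtain ⟨g, hgx⟩ : ∃ g : G, (g : WithTop G) = v x := by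
    cases h : v x with
    | top => exact (hvx h).elim
    | coe c => exact ⟨c, rfl⟩
  obtain ⟨h, hhy⟩ : ∃ h : G, (h : WithTop G) = v y := by
    cases h : v y with
    | top => exact (hvy h).elim
    | coe c => exact ⟨c, rfl⟩
  have hxm : x ∈ vGge v hg g := le_of_eq hgx
  have hym : y ∈ vGge v hg h := le_of_eq hhy
  have hxp : fam g 0 (vMk v hg g x hxm) := (bk_bridge fam hgx hxm).mp hx
  have hyp : fam h 0 (vMk v hg h y hym) := (bk_bridge fam hhy hym).mp hy
  rcases lt_trichotomy g h with hlt | heq | hlt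
  · -- v (x+y) = g, class = class of x
    have hv1 : v (x + y) = (g : WithTop G) := by
      rw [bk_v_add_eq hg (by rw [← hgx, ← hhy]; exact_mod_cast hlt), hgx]
    have hm : x + y ∈ vGge v hg g := le_of_eq hv1.symm
    rw [bk_bridge fam hv1.symm hm]
    have : vMk v hg g (x + y) hm = vMk v hg g x hxm := by
      rw [vMk_eq_iff]
      have : x - (x + y) = -y := by ring
      rw [this, bk_v_neg hg, ← hhy]
      exact_mod_cast hlt
    rw [this]
    exact hxp
  · subst heq
    have hym' : y ∈ vGge v hg g := hym
    have hsm : x + y ∈ vGge v hg g := add_mem hxm hym'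
    have hsum : vMk v hg g x hxm + vMk v hg g y hym' = vMk v hg g (x + y) hsm := vMk_add _ _
    have hpos : fam g 0 (vMk v hg g (x + y) hsm) := by
      rw [← hsum]
      have h1 : fam g (vMk v hg g x hxm) (vMk v hg g x hxm + vMk v hg g y hym') := by
        have := GO.add (hGO g) (vMk v hg g x hxm) hyp
        rwa [zero_add, add_comm] at this
      exact GO.trans (hGO g) hxp h1
    rcases eq_or_lt_of_le (mem_vGge.mp hsm) with he | hl
    · rw [bk_bridge fam he hsm]
      exact hpos
    · -- class of x+y at level g is zero, contradiction with x class nonzero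
      exfalso
      have hz : vMk v hg g (x + y) hsm = 0 := (vMk_eq_zero_iff _).mpr hl
      have h1 : fam g (vMk v hg g x hxm) 0 := by
        have := GO.add (hGO g) (vMk v hg g x hxm) hyp
        rw [zero_add, add_comm, hsum, hz] at this
        exact this
      have : vMk v hg g x hxm = 0 := GO.antisymm (hGO g) h1 hxp
      rw [vMk_eq_zero_iff, ← hgx] at this
      exact lt_irrefl _ this
  · have hv1 : v (x + y) = (h : WithTop G) := by
      rw [add_comm, bk_v_add_eq hg (by rw [← hgx, ← hhy]; exact_mod_cast hlt), hhy]
    have hm : x + y ∈ vGge v hg h := le_of_eq hv1.symm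
    rw [bk_bridge fam hv1.symm hm]
    have : vMk v hg h (x + y) hm = vMk v hg h y hym := by
      rw [vMk_eq_iff]
      have : y - (x + y) = -x := by ring
      rw [this, bk_v_neg hg, ← hgx]
      exact_mod_cast hlt
    rw [this]
    exact hyp

theorem lift_groupOrder {hg : IsGroupVal v}
    {fam : ∀ g : G, vQuot v hg g → vQuot v hg g → Prop}
    (hGO : ∀ g, IsGroupOrder (fam g)) :
    IsGroupOrder (LiftOrdFam v hg fam) := by
  have hneg : ∀ x : K, x ≠ 0 → ∃ g : G, (g : WithTop G) = v x := by
    intro x hx0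
    cases h : v x with
    | top => exact ((fun h2 => hx0 ((hg.1 x).mp h2)) h).elim
    | coe c => exact ⟨c, rfl⟩
  have hflip : ∀ x : K, LiftOrdFam v hg fam 0 x → LiftOrdFam v hg fam x 0 → x = 0 := by
    rintro x (h1 | ⟨g, hg1, hm1, h1⟩) h2
    · exact h1.symm
    rcases h2 with h2 | ⟨g', hg2, hm2, h2⟩
    · exact h2
    exfalso
    have hgg : g' = g := WithTop.coe_injective (by
      rw [hg2, hg1, zero_sub, sub_zero, bk_v_neg hg])
    subst hgg
    have hmx : x ∈ vGge v hg g' := le_of_eq (hg1.trans (congrArg v (sub_zero x)))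
    have e1 : vMk v hg g' (x - 0) hm1 = vMk v hg g' x hmx := vMk_congr _ _ (sub_zero x)
    have e2 : vMk v hg g' (0 - x) hm2 = -vMk v hg g' x hmx := by
      rw [vMk_neg]; exact vMk_congr _ _ (zero_sub x)
    rw [e1] at h1
    rw [e2] at h2
    have h3 := (GO.neg_iff (hGO g') _).mpr h2
    have h4 := GO.antisymm (hGO g') h3 h1
    rw [vMk_eq_zero_iff] at h4
    rw [sub_zero] at hg1
    rw [← hg1] at h4
    exact lt_irrefl _ h4
  refine ⟨⟨fun a => Or.inl rfl, ?_, ?_⟩, ?_, ?_⟩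
  · -- transitive
    intro a b c hab hbc
    rw [lift_shift] at hab hbc ⊢
    have := lift_pos_add hGO hab hbc
    have he : b - a + (c - b) = c - a := by ring
    rwa [he] at this
  · -- total
    intro a b
    by_cases hab : a = b
    · exact Or.inl (Or.inl hab)
    have hba : b - a ≠ 0 := sub_ne_zero.mpr (Ne.symm hab)
    obtain ⟨g, hg1⟩ := hneg _ hba
    have hm : b - a ∈ vGge v hg g := le_of_eq hg1
    rcases GO.total (hGO g) 0 (vMk v hg g (b - a) hm) with h | h
    · exact Or.inl (Or.inr ⟨g, hg1, hm, h⟩)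
    · right
      rw [lift_shift]
      right
      have hg2 : (g : WithTop G) = v (a - b) := by
        rw [← neg_sub, bk_v_neg hg]; exact hg1
      refine ⟨g, by rwa [sub_zero], by rw [sub_zero]; exact le_of_eq hg2, ?_⟩
      have e1 : vMk v hg g (a - b - 0) (by rw [sub_zero]; exact le_of_eq hg2) =
          -vMk v hg g (b - a) hm := by
        rw [vMk_neg]
        exact vMk_congr _ _ (by ring)
      rw [e1]
      exact (GO.neg_iff (hGO g) _).mp h
  · -- antisymmetric
    intro a b h1 h2
    rw [lift_shift] at h1 h2
    have : b - a = 0 := by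
      apply hflip _ h1
      rw [lift_shift]
      have e : (0:K) - (b - a) = a - b := by ring
      rw [e]
      exact h2
    exact (sub_eq_zero.mp this).symm
  · -- translation
    intro a b c h
    rw [lift_shift] at h ⊢
    have e : b + c - (a + c) = b - a := by ring
    rwa [e]
end BKHelpers6
section BKHelpers7
universe u v
variable {K : Type u} [Field K] {G : Type v} [AddCommGroup G] [LinearOrder G] [IsOrderedAddMonoid G]
variable {v : K → WithTop G}

theorem bk_v_unit_part (hv : IsFieldVal v) {s : G → K} (hs : IsQSection v s) {g : G} {x : K}
    (hx : (g : WithTop G) = v x) : v ((s g)⁻¹ * x) = ((0:G) : WithTop G) := by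
  rw [hv.2.2.1, bk_v_inv_coe hv (hs.2.1 g), ← hx, ← WithTop.coe_add]
  norm_num

theorem famOfPair_pos_iff (hv : IsFieldVal v) {s : G → K} (hs : IsQSection v s)
    (le0 : vQuot v hv.toGroupVal (0:G) → vQuot v hv.toGroupVal (0:G) → Prop) (ε : G → ℤˣ)
    {g : G} {x : K} (hx : (g : WithTop G) = v x)
    (hm0 : (s g)⁻¹ * x ∈ vGge v hv.toGroupVal (0:G)) :
    LiftOrdFam v hv.toGroupVal (FamOfPair v hv.toGroupVal s le0 ε) 0 x ↔
      (if ε g = 1 then le0 0 (vMk v hv.toGroupVal 0 ((s g)⁻¹ * x) hm0)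
        else le0 (vMk v hv.toGroupVal 0 ((s g)⁻¹ * x) hm0) 0) := by
  have hsne : s g ≠ 0 := bk_s_ne_zero hv hs g
  have hmx : x ∈ vGge v hv.toGroupVal g := le_of_eq hx
  have hsa : s g * ((s g)⁻¹ * x) = x := by field_simp
  have hm' : s g * ((s g)⁻¹ * x) ∈ vGge v hv.toGroupVal g := by rw [hsa]; exact hmx
  have h00 : s g * 0 ∈ vGge v hv.toGroupVal g := by rw [mul_zero]; exact zero_mem _
  rw [bk_bridge _ hx hmx]
  have e0 : (0 : vQuot v hv.toGroupVal g) = vMk v hv.toGroupVal g (s g * 0) h00 := by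
    rw [← vMk_zero (zero_mem (vGge v hv.toGroupVal g))]
    exact vMk_congr _ _ (mul_zero _).symm
  have ex : vMk v hv.toGroupVal g x hmx =
      vMk v hv.toGroupVal g (s g * ((s g)⁻¹ * x)) hm' := vMk_congr _ _ hsa.symm
  rw [e0, ex, famOfPair_iff hv hs le0 ε (zero_mem _) hm0 h00 hm']
  have ez : vMk v hv.toGroupVal (0:G) 0 (zero_mem _) = 0 := vMk_zero _
  rw [ez]

theorem famOfPair_fieldOrder (hv : IsFieldVal v) {s : G → K} (hs : IsQSection v s)
    {le0 : vQuot v hv.toGroupVal (0:G) → vQuot v hv.toGroupVal (0:G) → Prop}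
    (hR : IsResFieldOrder v hv.toGroupVal le0) {ε : G → ℤˣ}
    (hhom : ∀ g h : G, ε (g + h) = ε g * ε h) :
    IsFieldOrder (LiftOrdFam v hv.toGroupVal (FamOfPair v hv.toGroupVal s le0 ε)) := by
  refine ⟨lift_groupOrder (fun g => famOfPair_groupOrder hv hs hR ε g), ?_⟩
  intro a b hla hlb
  by_cases ha0 : a = 0
  · exact Or.inl (by rw [ha0, zero_mul])
  by_cases hb0 : b = 0
  · exact Or.inl (by rw [hb0, mul_zero])
  obtain ⟨g, hga⟩ : ∃ g : G, (g : WithTop G) = v a := by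
    cases h : v a with
    | top => exact absurd ((hv.2.1 a).mp h) ha0
    | coe c => exact ⟨c, rfl⟩
  obtain ⟨h, hhb⟩ : ∃ h : G, (h : WithTop G) = v b := by
    cases h : v b with
    | top => exact absurd ((hv.2.1 b).mp h) hb0
    | coe c => exact ⟨c, rfl⟩
  set α := (s g)⁻¹ * a with hαdef
  set β := (s h)⁻¹ * b with hβdef
  have hα : α ∈ vGge v hv.toGroupVal (0:G) := le_of_eq (bk_v_unit_part hv hs hga).symm
  have hβ : β ∈ vGge v hv.toGroupVal (0:G) := le_of_eq (bk_v_unit_part hv hs hhb).symm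
  have hA := (famOfPair_pos_iff hv hs le0 ε hga hα).mp hla
  have hB := (famOfPair_pos_iff hv hs le0 ε hhb hβ).mp hlb
  -- the square correction
  obtain ⟨d, hdne, hd⟩ := hs.2.2 g h
  have hsg : s g ≠ 0 := bk_s_ne_zero hv hs g
  have hsh : s h ≠ 0 := bk_s_ne_zero hv hs h
  have hsgh : s (g + h) ≠ 0 := bk_s_ne_zero hv hs (g + h)
  have hvsgsh : v (s g * s h) = ((g + h : G) : WithTop G) := by
    rw [hv.2.2.1, hs.2.1, hs.2.1, ← WithTop.coe_add]
  have hvd2 : v (d ^ 2) = ((0:G) : WithTop G) := by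
    rw [← hd, hv.2.2.1, hs.2.1, bk_v_inv_coe hv hvsgsh, ← WithTop.coe_add,
      WithTop.coe_eq_coe]
    abel
  have hvd : v d = ((0:G) : WithTop G) := by
    obtain ⟨c, hc⟩ : ∃ c : G, (c : WithTop G) = v d := by
      cases hcc : v d with
      | top => exact absurd ((hv.2.1 d).mp hcc) hdne
      | coe c => exact ⟨c, rfl⟩
    rw [pow_two, hv.2.2.1, ← hc, ← WithTop.coe_add, WithTop.coe_eq_coe] at hvd2
    have hc0 : c = 0 := by
      rcases lt_trichotomy c 0 with h1 | h1 | h1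
      · exact absurd hvd2 (ne_of_lt (add_neg h1 h1))
      · exact h1
      · exact absurd hvd2 (ne_of_gt (add_pos h1 h1))
    rw [← hc, hc0]
  set e := d⁻¹ with hedef
  have he : e ∈ vGge v hv.toGroupVal (0:G) := by
    rw [mem_vGge, hedef, bk_v_inv_coe hv hvd, neg_zero]
  -- value of a * b
  have hab0 : a * b ≠ 0 := mul_ne_zero ha0 hb0
  have hvab : ((g + h : G) : WithTop G) = v (a * b) := by
    rw [hv.2.2.1, ← hga, ← hhb, ← WithTop.coe_add]
  have hγ : (s (g + h))⁻¹ * (a * b) ∈ vGge v hv.toGroupVal (0:G) :=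
    le_of_eq (bk_v_unit_part hv hs hvab).symm
  -- key algebraic identity
  have hs2 : s (g + h) = d ^ 2 * (s g * s h) := by
    field_simp at hd
    rw [hd]; ring
  have hEq : (s (g + h))⁻¹ * (a * b) = e * e * (α * β) := by
    rw [hαdef, hβdef, hedef, hs2]
    field_simp
  -- conclude
  rw [famOfPair_pos_iff hv hs le0 ε hvab hγ]
  have hsq := res_sq_pos hv hR he
  have hmαβ := mem0_mul hv hα hβ
  have hmee := mem0_mul hv he he
  rcases Int.units_eq_one_or (ε g) with hg1 | hg1 <;>
    rcases Int.units_eq_one_or (ε h) with hh1 | hh1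
  · -- + +
    simp only [hg1, if_pos rfl] at hA
    simp only [hh1, if_pos rfl] at hB
    have hpos := hR.2 _ _ hmee hmαβ (mem0_mul hv hmee hmαβ) hsq
      (hR.2 _ _ hα hβ hmαβ hA hB)
    have : ε (g + h) = 1 := by rw [hhom, hg1, hh1, one_mul]
    rw [if_pos this]
    rwa [vMk_congr hγ (mem0_mul hv hmee hmαβ) hEq]
  · -- + -
    simp only [hg1, if_pos rfl] at hA
    have hne : ε h ≠ 1 := by rw [hh1]; decide
    simp only [if_neg hne] at hB
    have hB' : le0 0 (vMk v hv.toGroupVal 0 (-β) (neg_mem hβ)) := by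
      rw [← vMk_neg hβ]
      exact (GO.neg_iff hR.1 _).mp hB
    have hmαβ' := mem0_mul hv hα (neg_mem hβ)
    have hpos := hR.2 _ _ hmee hmαβ' (mem0_mul hv hmee hmαβ') hsq
      (hR.2 _ _ hα (neg_mem hβ) hmαβ' hA hB')
    have hεn : ε (g + h) ≠ 1 := by rw [hhom, hg1, hh1]; decide
    rw [if_neg hεn]
    have econv : vMk v hv.toGroupVal 0 (e * e * (α * -β)) (mem0_mul hv hmee hmαβ') =
        -vMk v hv.toGroupVal 0 ((s (g + h))⁻¹ * (a * b)) hγ := by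
      rw [vMk_neg]
      exact vMk_congr _ _ (by rw [hEq]; ring)
    rw [econv] at hpos
    exact (GO.neg_iff hR.1 _).mpr hpos
  · -- - +
    have hne : ε g ≠ 1 := by rw [hg1]; decide
    simp only [if_neg hne] at hA
    simp only [hh1, if_pos rfl] at hB
    have hA' : le0 0 (vMk v hv.toGroupVal 0 (-α) (neg_mem hα)) := by
      rw [← vMk_neg hα]
      exact (GO.neg_iff hR.1 _).mp hA
    have hmαβ' := mem0_mul hv (neg_mem hα) hβ
    have hpos := hR.2 _ _ hmee hmαβ' (mem0_mul hv hmee hmαβ') hsq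
      (hR.2 _ _ (neg_mem hα) hβ hmαβ' hA' hB)
    have hεn : ε (g + h) ≠ 1 := by rw [hhom, hg1, hh1]; decide
    rw [if_neg hεn]
    have econv : vMk v hv.toGroupVal 0 (e * e * (-α * β)) (mem0_mul hv hmee hmαβ') =
        -vMk v hv.toGroupVal 0 ((s (g + h))⁻¹ * (a * b)) hγ := by
      rw [vMk_neg]
      exact vMk_congr _ _ (by rw [hEq]; ring)
    rw [econv] at hpos
    exact (GO.neg_iff hR.1 _).mpr hpos
  · -- - -
    have hneg : ε g ≠ 1 := by rw [hg1]; decide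
    have hneh : ε h ≠ 1 := by rw [hh1]; decide
    simp only [if_neg hneg] at hA
    simp only [if_neg hneh] at hB
    have hA' : le0 0 (vMk v hv.toGroupVal 0 (-α) (neg_mem hα)) := by
      rw [← vMk_neg hα]
      exact (GO.neg_iff hR.1 _).mp hA
    have hB' : le0 0 (vMk v hv.toGroupVal 0 (-β) (neg_mem hβ)) := by
      rw [← vMk_neg hβ]
      exact (GO.neg_iff hR.1 _).mp hB
    have hmαβ' := mem0_mul hv (neg_mem hα) (neg_mem hβ)
    have hpos := hR.2 _ _ hmee hmαβ' (mem0_mul hv hmee hmαβ') hsq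
      (hR.2 _ _ (neg_mem hα) (neg_mem hβ) hmαβ' hA' hB')
    have hε1 : ε (g + h) = 1 := by rw [hhom, hg1, hh1]; decide
    rw [if_pos hε1]
    have econv : vMk v hv.toGroupVal 0 (e * e * (-α * -β)) (mem0_mul hv hmee hmαβ') =
        vMk v hv.toGroupVal 0 ((s (g + h))⁻¹ * (a * b)) hγ := vMk_congr _ _ (by rw [hEq]; ring)
    rwa [econv] at hpos

end BKHelpers7
section BKHelpers8
universe u v
variable {K : Type u} [Field K] {G : Type v} [AddCommGroup G] [LinearOrder G] [IsOrderedAddMonoid G]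
variable {v : K → WithTop G}

/-- `FamOfPair` at level `0` recovers `le0`. -/
theorem famOfPair_zero (hv : IsFieldVal v) {s : G → K} (hs : IsQSection v s)
    (le0 : vQuot v hv.toGroupVal (0:G) → vQuot v hv.toGroupVal (0:G) → Prop) {ε : G → ℤˣ}
    (hε0 : ε 0 = 1) (x y : vQuot v hv.toGroupVal (0:G)) :
    FamOfPair v hv.toGroupVal s le0 ε 0 x y ↔ le0 x y := by
  obtain ⟨a, ha, rfl⟩ := vMk_surj x
  obtain ⟨b, hb, rfl⟩ := vMk_surj y
  have ha' : s 0 * a ∈ vGge v hv.toGroupVal (0:G) := by rw [hs.1, one_mul]; exact ha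
  have hb' : s 0 * b ∈ vGge v hv.toGroupVal (0:G) := by rw [hs.1, one_mul]; exact hb
  have ea : vMk v hv.toGroupVal 0 a ha = vMk v hv.toGroupVal 0 (s 0 * a) ha' :=
    vMk_congr _ _ (by rw [hs.1, one_mul])
  have eb : vMk v hv.toGroupVal 0 b hb = vMk v hv.toGroupVal 0 (s 0 * b) hb' :=
    vMk_congr _ _ (by rw [hs.1, one_mul])
  rw [ea, eb, famOfPair_iff hv hs le0 ε ha hb ha' hb', if_pos hε0]
  rw [← ea, ← eb]

/-- `FamOfPair` determines `ε` via the sign of `s g`. -/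
theorem famOfPair_sign (hv : IsFieldVal v) {s : G → K} (hs : IsQSection v s)
    {le0 : vQuot v hv.toGroupVal (0:G) → vQuot v hv.toGroupVal (0:G) → Prop}
    (hR : IsResFieldOrder v hv.toGroupVal le0) (ε : G → ℤˣ) (g : G) :
    FamOfPair v hv.toGroupVal s le0 ε g 0
        (vMk v hv.toGroupVal g (s g) (le_of_eq (hs.2.1 g).symm)) ↔ ε g = 1 := by
  have h00 : s g * 0 ∈ vGge v hv.toGroupVal g := by rw [mul_zero]; exact zero_mem _
  have h11 : s g * 1 ∈ vGge v hv.toGroupVal g := by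
    rw [mul_one]; exact le_of_eq (hs.2.1 g).symm
  have e0 : (0 : vQuot v hv.toGroupVal g) = vMk v hv.toGroupVal g (s g * 0) h00 := by
    rw [← vMk_zero (zero_mem (vGge v hv.toGroupVal g))]
    exact vMk_congr _ _ (mul_zero _).symm
  have e1 : vMk v hv.toGroupVal g (s g) (le_of_eq (hs.2.1 g).symm) =
      vMk v hv.toGroupVal g (s g * 1) h11 := vMk_congr _ _ (mul_one _).symm
  rw [e0, e1, famOfPair_iff hv hs le0 ε (zero_mem _) (mem0_one hv) h00 h11]
  have ez : vMk v hv.toGroupVal (0:G) 0 (zero_mem _) = 0 := vMk_zero _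
  rw [ez]
  by_cases hε : ε g = 1
  · rw [if_pos hε]
    exact iff_of_true (res_one_pos hv hR) hε
  · rw [if_neg hε]
    exact iff_of_false (res_one_not_neg hv hR) hε

/-- If the lifting of a family is a field order then `fam 0` is a residue field order. -/
theorem surj_resOrder (hv : IsFieldVal v)
    {fam : ∀ g : G, vQuot v hv.toGroupVal g → vQuot v hv.toGroupVal g → Prop}
    (hGO : ∀ g, IsGroupOrder (fam g))
    (hL : IsFieldOrder (LiftOrdFam v hv.toGroupVal fam)) :
    IsResFieldOrder v hv.toGroupVal (fam 0) := by
  refine ⟨hGO 0, ?_⟩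
  intro a b ha hb hab h1 h2
  rcases eq_or_lt_of_le (mem_vGge.mp hab) with he | hl
  · -- v (a*b) = 0 : both a b are units
    have hvab := hv.2.2.1 a b
    have hva : v a = ((0:G) : WithTop G) ∧ v b = ((0:G) : WithTop G) := by
      have hane : v a ≠ ⊤ := fun hc => by
        rw [hc, top_add] at hvab; rw [← he] at hvab; exact WithTop.coe_ne_top hvab
      have hbne : v b ≠ ⊤ := fun hc => by
        rw [hc, add_top] at hvab; rw [← he] at hvab; exact WithTop.coe_ne_top hvab
      obtain ⟨va, hva'⟩ : ∃ p : G, v a = (p : WithTop G) := by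
        cases hx : v a with
        | top => exact (hane hx).elim
        | coe c => exact ⟨c, rfl⟩
      obtain ⟨vb, hvb'⟩ : ∃ p : G, v b = (p : WithTop G) := by
        cases hx : v b with
        | top => exact (hbne hx).elim
        | coe c => exact ⟨c, rfl⟩
      rw [← he, hva', hvb', ← WithTop.coe_add, WithTop.coe_eq_coe] at hvab
      have h0a : (0:G) ≤ va := by
        have := mem_vGge.mp ha; rw [hva'] at this; exact_mod_cast this
      have h0b : (0:G) ≤ vb := by
        have := mem_vGge.mp hb; rw [hvb'] at this; exact_mod_cast this
      obtain ⟨e1, e2⟩ := (add_eq_zero_iff_of_nonneg h0a h0b).mp hvab.symm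
      constructor
      · rw [hva', e1]
      · rw [hvb', e2]
    have hla : LiftOrdFam v hv.toGroupVal fam 0 a := (bk_bridge fam hva.1.symm ha).mpr h1
    have hlb : LiftOrdFam v hv.toGroupVal fam 0 b := (bk_bridge fam hva.2.symm hb).mpr h2
    exact (bk_bridge fam he hab).mp (hL.2 a b hla hlb)
  · -- v (a*b) > 0 : the class is zero
    rw [(vMk_eq_zero_iff hab).mpr hl]
    exact GO.refl (hGO 0) 0

/-- A `{±1}`-valued map whose value detects the sign of `s g` is a homomorphism. -/
theorem surj_sign_hom (hv : IsFieldVal v) {s : G → K} (hs : IsQSection v s)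
    {fam : ∀ g : G, vQuot v hv.toGroupVal g → vQuot v hv.toGroupVal g → Prop}
    (hL : IsFieldOrder (LiftOrdFam v hv.toGroupVal fam)) {ε : G → ℤˣ}
    (hchar : ∀ g, (ε g = 1 ↔ LiftOrdFam v hv.toGroupVal fam 0 (s g))) (g h : G) :
    ε (g + h) = ε g * ε h := by
  set L := LiftOrdFam v hv.toGroupVal fam with hLdef
  obtain ⟨d, hdne, hd⟩ := hs.2.2 g h
  have hsg : s g ≠ 0 := bk_s_ne_zero hv hs g
  have hsh : s h ≠ 0 := bk_s_ne_zero hv hs h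
  have hs2 : s (g + h) = d ^ 2 * (s g * s h) := by
    field_simp at hd
    rw [hd]; ring
  have key : ε (g + h) = 1 ↔ (ε g = 1 ↔ ε h = 1) := by
    rw [hchar, hchar, hchar, hs2]
    have hd2 : (d ^ 2 : K) ≠ 0 := pow_ne_zero 2 hdne
    rw [FO.mul_sign hL hd2 (mul_ne_zero hsg hsh)]
    have hdpos : L 0 (d ^ 2) := by rw [pow_two]; exact FO.sq_pos hL d
    rw [iff_true_intro hdpos, true_iff]
    exact FO.mul_sign hL hsg hsh
  rcases Int.units_eq_one_or (ε g) with hg1 | hg1 <;>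
    rcases Int.units_eq_one_or (ε h) with hh1 | hh1 <;>
      rcases Int.units_eq_one_or (ε (g + h)) with hgh1 | hgh1 <;>
        rw [hg1, hh1, hgh1] at key ⊢ <;> revert key <;> decide

/-- Core computation: the sign of the class of `s g * c` at level `g`. -/
theorem surj_core (hv : IsFieldVal v) {s : G → K} (hs : IsQSection v s)
    {fam : ∀ g : G, vQuot v hv.toGroupVal g → vQuot v hv.toGroupVal g → Prop}
    (hGO : ∀ g, IsGroupOrder (fam g))
    (hL : IsFieldOrder (LiftOrdFam v hv.toGroupVal fam)) {ε : G → ℤˣ}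
    (hchar : ∀ g, (ε g = 1 ↔ LiftOrdFam v hv.toGroupVal fam 0 (s g))) (g : G) {c : K}
    (hc : c ∈ vGge v hv.toGroupVal (0:G)) (hmc : s g * c ∈ vGge v hv.toGroupVal g) :
    fam g 0 (vMk v hv.toGroupVal g (s g * c) hmc) ↔
      (if ε g = 1 then fam 0 0 (vMk v hv.toGroupVal 0 c hc)
        else fam 0 0 (vMk v hv.toGroupVal 0 (-c) (neg_mem hc))) := by
  rcases eq_or_lt_of_le (mem_vGge.mp hc) with he | hl
  · -- v c = 0
    have hcne : c ≠ 0 := fun h0 => by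
      rw [h0, (hv.2.1 0).mpr rfl] at he; exact WithTop.coe_ne_top he
    have hvsc : (g : WithTop G) = v (s g * c) := by
      rw [bk_v_smul hv hs, ← he, ← WithTop.coe_add, add_zero]
    rw [← bk_bridge fam hvsc hmc]
    rw [FO.mul_sign hL (bk_s_ne_zero hv hs g) hcne]
    rw [← hchar g]
    rw [← bk_bridge fam he hc]
    by_cases hε : ε g = 1
    · rw [if_pos hε, iff_true_intro hε, true_iff]
    · rw [if_neg hε, iff_false_intro hε, false_iff]
      have hvnc : ((0:G) : WithTop G) = v (-c) := by rw [bk_v_neg hv.toGroupVal, ← he]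
      rw [← bk_bridge fam hvnc (neg_mem hc)]
      constructor
      · intro h1
        rcases FO.pos_total hL c with h2 | h2
        · exact absurd h2 h1
        · exact h2
      · intro h1 h2
        exact FO.not_both hL hcne h2 h1
  · -- v c > 0 : all classes are zero
    have hsc : (g : WithTop G) < v (s g * c) := by
      rw [bk_v_smul hv hs, bk_lt_coe_add]
      exact lt_of_le_of_lt (le_of_eq WithTop.coe_zero.symm) hl
    rw [(vMk_eq_zero_iff hmc).mpr hsc, (vMk_eq_zero_iff hc).mpr hl,
      (vMk_eq_zero_iff (neg_mem hc)).mpr (by rwa [bk_v_neg hv.toGroupVal])]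
    split <;> exact iff_of_true (GO.refl (hGO g) 0) (GO.refl (hGO 0) 0)

/-- Reconstruction: `FamOfPair (fam 0) ε = fam`. -/
theorem surj_reconstruct (hv : IsFieldVal v) {s : G → K} (hs : IsQSection v s)
    {fam : ∀ g : G, vQuot v hv.toGroupVal g → vQuot v hv.toGroupVal g → Prop}
    (hGO : ∀ g, IsGroupOrder (fam g))
    (hL : IsFieldOrder (LiftOrdFam v hv.toGroupVal fam)) {ε : G → ℤˣ}
    (hchar : ∀ g, (ε g = 1 ↔ LiftOrdFam v hv.toGroupVal fam 0 (s g))) :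
    FamOfPair v hv.toGroupVal s (fam 0) ε = fam := by
  funext g x y
  apply propext
  obtain ⟨a, ha, ha', rfl⟩ := vMk_rep hv hs x
  obtain ⟨b, hb, hb', rfl⟩ := vMk_rep hv hs y
  rw [famOfPair_iff hv hs (fam 0) ε ha hb ha' hb']
  have hcm : b - a ∈ vGge v hv.toGroupVal (0:G) := sub_mem hb ha
  have hmc : s g * (b - a) ∈ vGge v hv.toGroupVal g := by
    rw [mul_sub]; exact sub_mem hb' ha'
  -- RHS: fam g x y ↔ fam g 0 (class of s g * (b - a))
  have hRHS : fam g (vMk v hv.toGroupVal g (s g * a) ha') (vMk v hv.toGroupVal g (s g * b) hb')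
      ↔ fam g 0 (vMk v hv.toGroupVal g (s g * (b - a)) hmc) := by
    rw [GO.sub_iff (hGO g)]
    have e : vMk v hv.toGroupVal g (s g * b) hb' - vMk v hv.toGroupVal g (s g * a) ha' =
        vMk v hv.toGroupVal g (s g * (b - a)) hmc := by
      rw [sub_eq_add_neg, vMk_neg, vMk_add]
      exact vMk_congr _ _ (by ring)
    rw [e]
  rw [hRHS, surj_core hv hs hGO hL hchar g hcm hmc]
  -- now both sides are if-expressions over `fam 0`
  by_cases hε : ε g = 1
  · rw [if_pos hε, if_pos hε, GO.sub_iff (hGO 0)]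
    have e : vMk v hv.toGroupVal 0 b hb - vMk v hv.toGroupVal 0 a ha =
        vMk v hv.toGroupVal 0 (b - a) hcm := by
      rw [sub_eq_add_neg, vMk_neg, vMk_add]
      exact vMk_congr _ _ (by ring)
    rw [e]
  · rw [if_neg hε, if_neg hε, GO.sub_iff (hGO 0)]
    have e : vMk v hv.toGroupVal 0 a ha - vMk v hv.toGroupVal 0 b hb =
        vMk v hv.toGroupVal 0 (-(b - a)) (neg_mem hcm) := by
      rw [sub_eq_add_neg, vMk_neg, vMk_add]
      exact vMk_congr _ _ (by ring)
    rw [e]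

end BKHelpers8
theorem stmt19 {K : Type u} [Field K] {G : Type v} [AddCommGroup G] [LinearOrder G] [IsOrderedAddMonoid G]
    (v : K → WithTop G) (hv : IsFieldVal v) (s : G → K) (hs : IsQSection v s) :
    ∃ F : ({le0 : vQuot v hv.toGroupVal (0 : G) → vQuot v hv.toGroupVal (0 : G) → Prop //
            IsResFieldOrder v hv.toGroupVal le0} ×
           {ε : G → ℤˣ // ∀ g h : G, ε (g + h) = ε g * ε h}) →
          {fam : ∀ g : G, vQuot v hv.toGroupVal g → vQuot v hv.toGroupVal g → Prop //
            (∀ g : G, IsGroupOrder (fam g)) ∧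
              IsFieldOrder (LiftOrdFam v hv.toGroupVal fam)},
      (∀ p, (F p : ∀ g : G, vQuot v hv.toGroupVal g → vQuot v hv.toGroupVal g → Prop) =
          FamOfPair v hv.toGroupVal s p.1.1 p.2.1) ∧
        Function.Bijective F := by
  classical
  refine ⟨fun p => ⟨FamOfPair v hv.toGroupVal s p.1.1 p.2.1,
    fun g => famOfPair_groupOrder hv hs p.1.2 p.2.1 g,
    famOfPair_fieldOrder hv hs p.1.2 p.2.2⟩, fun p => rfl, ?_, ?_⟩
  · -- injective
    intro p q hpq
    have hfam : FamOfPair v hv.toGroupVal s p.1.1 p.2.1 =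
        FamOfPair v hv.toGroupVal s q.1.1 q.2.1 := congrArg Subtype.val hpq
    have hεp0 : p.2.1 0 = 1 := by
      have h1 := p.2.2 0 0
      rw [add_zero] at h1
      have h2 : p.2.1 0 * 1 = p.2.1 0 * p.2.1 0 := by rw [mul_one]; exact h1
      exact (mul_left_cancel h2).symm
    have hεq0 : q.2.1 0 = 1 := by
      have h1 := q.2.2 0 0
      rw [add_zero] at h1
      have h2 : q.2.1 0 * 1 = q.2.1 0 * q.2.1 0 := by rw [mul_one]; exact h1
      exact (mul_left_cancel h2).symm
    have hle : p.1.1 = q.1.1 := by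
      funext x y
      apply propext
      rw [← famOfPair_zero hv hs p.1.1 hεp0 x y, ← famOfPair_zero hv hs q.1.1 hεq0 x y, hfam]
    have hεe : p.2.1 = q.2.1 := by
      funext g
      have h1 := famOfPair_sign hv hs p.1.2 p.2.1 g
      have h2 := famOfPair_sign hv hs q.1.2 q.2.1 g
      rw [hfam] at h1
      have h3 : p.2.1 g = 1 ↔ q.2.1 g = 1 := by rw [← h1, ← h2]
      rcases Int.units_eq_one_or (p.2.1 g) with e | e <;>
        rcases Int.units_eq_one_or (q.2.1 g) with f | f <;>
          rw [e, f] at h3 ⊢ <;> revert h3 <;> decide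
    have hp1 : p.1 = q.1 := Subtype.ext hle
    have hp2 : p.2 = q.2 := Subtype.ext hεe
    exact Prod.ext hp1 hp2
  · -- surjective
    rintro ⟨fam, hGO, hL⟩
    set ε : G → ℤˣ := fun g =>
      if LiftOrdFam v hv.toGroupVal fam 0 (s g) then 1 else -1 with hεdef
    have hchar : ∀ g, (ε g = 1 ↔ LiftOrdFam v hv.toGroupVal fam 0 (s g)) := by
      intro g
      simp only [hεdef]
      by_cases h : LiftOrdFam v hv.toGroupVal fam 0 (s g)
      · simp only [if_pos h]
        exact ⟨fun _ => h, fun _ => by trivial⟩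
      · simp only [if_neg h]
        exact iff_of_false (by decide) h
    refine ⟨⟨⟨fam 0, surj_resOrder hv hGO hL⟩, ⟨ε, surj_sign_hom hv hs hL hchar⟩⟩, ?_⟩
    apply Subtype.ext
    exact surj_reconstruct hv hs hGO hL hchar
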